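/- arXiv:1305.0931 — 3 statements merged into one kernel-verified Lean document; each statement's English description precedes it below -/
import Mathlib

section
/- Let Δ be a simplicial complex on [n] that is not a cone over any vertex (equivalently, every variable x_i divides some minimal monomial generator of the Stanley–Reisner ideal I_Δ). Then the colon ideal I_Δ^[2] : I_Δ equals I_Δ^[2] + (x_1 x_2 ⋯ x_n) if and only if Δ has no free face. -/
/-!
Both ideals are monomial ideals, so the equality can be tested on monomials `x^e`. With
`A = {i | 2 ≤ e i}` and `B = {i | e i = 1}`, the monomial `x^e` lies in `I_Δ^[2]` iff `A ∉ Δ`, in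
`(x_1 ⋯ x_n)` iff `A ∪ B = [n]`, and in `I_Δ^[2] : I_Δ` iff `A ∪ (B ∩ F) ∉ Δ` for every non-face
`F`. So the colon is strictly larger exactly when there is a face `A` and a disjoint `B` with
`A ∪ B ≠ [n]` satisfying the last condition. A free face `F ⊂ F ∪ {i}` gives such a pair with
`A = F`, `B = [n] ∖ (F ∪ {i})`. Conversely, if `S ⊆ B` is maximal with `A ∪ S ∈ Δ`, then
`([n] ∖ B) ∪ S` is a face containing every face through `A ∪ S`; removing from it a vertex
`j ∉ A ∪ B` gives a free face.
-/

open MvPowerSeries Finset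

/-- A simplicial complex on `[n]`: contains `∅` and is closed under taking subsets. -/
def IsSimplicialComplex {n : ℕ} (Δ : Set (Finset (Fin n))) : Prop :=
  ∅ ∈ Δ ∧ ∀ F ∈ Δ, ∀ G, G ⊆ F → G ∈ Δ

/-- A facet: a face maximal with respect to inclusion. -/
def IsFacet {n : ℕ} (Δ : Set (Finset (Fin n))) (G : Finset (Fin n)) : Prop :=
  G ∈ Δ ∧ ∀ H ∈ Δ, G ⊆ H → H = G

/-- A free face: a face `F` such that `F ∪ {i}` is a facet for some `i ∉ F` and
`F ∪ {i}` is the unique facet containing `F`. -/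
def IsFreeFace {n : ℕ} (Δ : Set (Finset (Fin n))) (F : Finset (Fin n)) : Prop :=
  F ∈ Δ ∧ ∃ i ∉ F, IsFacet Δ (insert i F) ∧
    ∀ G, IsFacet Δ G → F ⊆ G → G = insert i F

/-- The Stanley–Reisner ideal `I_Δ` in `S = K[[x_1, …, x_n]]`. -/
noncomputable def SRIdeal (K : Type*) [Field K] {n : ℕ} (Δ : Set (Finset (Fin n))) :
    Ideal (MvPowerSeries (Fin n) K) :=
  Ideal.span ((fun F : Finset (Fin n) => ∏ i ∈ F, (X i : MvPowerSeries (Fin n) K)) ''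
    {F | F ∉ Δ})

/-- The second Frobenius power `I_Δ^[2]` in `S = K[[x_1, …, x_n]]`. -/
noncomputable def SRIdeal2 (K : Type*) [Field K] {n : ℕ} (Δ : Set (Finset (Fin n))) :
    Ideal (MvPowerSeries (Fin n) K) :=
  Ideal.span ((fun F : Finset (Fin n) => ∏ i ∈ F, (X i : MvPowerSeries (Fin n) K) ^ 2) ''
    {F | F ∉ Δ})

namespace MvPowerSeries

variable {σ R : Type*} [CommSemiring R]

theorem mem_span_monomial_one_iff {D : Set (σ →₀ ℕ)} (hD : D.Finite) {f : MvPowerSeries σ R} :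
    f ∈ Ideal.span ((monomial · (1 : R)) '' D) ↔ ∀ e, coeff e f ≠ 0 → ∃ d ∈ D, d ≤ e := by
  classical
  constructor
  · intro hf
    induction hf using Submodule.span_induction with
    | mem x hx =>
      obtain ⟨d, hd, rfl⟩ := hx
      exact fun e he => ⟨d, hd, (eq_of_coeff_monomial_ne_zero he).ge⟩
    | zero => simp
    | add x y _ _ hx hy =>
      intro e he
      by_cases hxe : coeff e x = 0
      · exact hy e (by simpa [hxe] using he)
      · exact hx e hxe
    | smul c x _ hx =>
      intro e he
      rw [smul_eq_mul, coeff_mul] at he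
      obtain ⟨p, hp, hne⟩ := Finset.exists_ne_zero_of_sum_ne_zero he
      obtain ⟨d, hd, hle⟩ := hx p.2 (right_ne_zero_of_mul hne)
      exact ⟨d, hd, hle.trans (mem_antidiagonal.1 hp ▸ le_add_self)⟩
  · lift D to Finset (σ →₀ ℕ) using hD
    induction D using Finset.induction_on generalizing f with
    | empty =>
      intro hf
      rw [show f = 0 from ext fun e => by_contra fun he => by simpa using hf e he]
      exact zero_mem _
    | insert d D _ ih =>
      intro hf
      -- split `f` into its terms divisible by `x ^ d` and the rest
      let g : MvPowerSeries σ R := fun e => coeff (e + d) f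
      let h : MvPowerSeries σ R := fun e => if d ≤ e then 0 else coeff e f
      have hg (e) : coeff e g = coeff (e + d) f := rfl
      have hh (e) : coeff e h = if d ≤ e then 0 else coeff e f := rfl
      have hfgh : f = g * monomial d 1 + h := by
        ext e
        rw [map_add, coeff_mul_monomial, hg, hh]
        by_cases hde : d ≤ e <;> simp [hde, tsub_add_cancel_of_le]
      have h_mem : h ∈ Ideal.span ((monomial · (1 : R)) '' (D : Set (σ →₀ ℕ))) := by
        refine ih fun e he => ?_
        have hde : ¬ d ≤ e := fun hde => he (by simp [hh, hde])
        obtain ⟨d', hd', hle⟩ := hf e (by simpa [hh, hde] using he)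
        exact ⟨d', (Finset.mem_insert.1 hd').resolve_left (by rintro rfl; exact hde hle), hle⟩
      rw [hfgh, coe_insert, Set.image_insert_eq, Ideal.span_insert]
      exact Ideal.add_mem _
        (Ideal.mem_sup_left (Ideal.mul_mem_left _ _ (Ideal.mem_span_singleton_self _)))
        (Ideal.mem_sup_right h_mem)

theorem forall_coeff_mul_monomial_ne_zero_imp {f : MvPowerSeries σ R} {d : σ →₀ ℕ}
    {P : (σ →₀ ℕ) → Prop} :
    (∀ e, coeff e (f * monomial d 1) ≠ 0 → P e) ↔ ∀ e, coeff e f ≠ 0 → P (e + d) := by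
  refine ⟨fun h e he => h _ (by rwa [coeff_add_mul_monomial, mul_one]), fun h e he => ?_⟩
  rw [coeff_mul_monomial] at he
  split_ifs at he with hde
  · simpa [tsub_add_cancel_of_le hde] using h (e - d) (by simpa using he)
  · exact absurd rfl he

theorem ideal_le_iff_of_forall_coeff [Nontrivial R] {I J : Ideal (MvPowerSeries σ R)}
    {P Q : (σ →₀ ℕ) → Prop} (hI : ∀ f, f ∈ I ↔ ∀ e, coeff e f ≠ 0 → P e)
    (hJ : ∀ f, f ∈ J ↔ ∀ e, coeff e f ≠ 0 → Q e) :
    I ≤ J ↔ ∀ e, P e → Q e := by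
  classical
  refine ⟨fun hIJ e he => ?_, fun h f hf => (hJ f).2 fun e hfe => h e ((hI f).1 hf e hfe)⟩
  have hmem : monomial e (1 : R) ∈ I := (hI _).2 fun e' he' => by
    rwa [eq_of_coeff_monomial_ne_zero he']
  exact (hJ _).1 (hIJ hmem) e (by simp)

end MvPowerSeries

section Exponents

variable {σ : Type*}

/-- The exponent of `∏ i ∈ F, X i ^ k`. -/
noncomputable def indicatorExp (k : ℕ) (F : Finset σ) : σ →₀ ℕ := ∑ i ∈ F, Finsupp.single i k

theorem indicatorExp_apply [DecidableEq σ] (k : ℕ) (F : Finset σ) (i : σ) :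
    indicatorExp k F i = if i ∈ F then k else 0 := by
  simp [indicatorExp, Finsupp.finsetSum_apply, Finsupp.single_apply]

theorem prod_X_pow_eq_monomial {R : Type*} [CommSemiring R] (k : ℕ) (F : Finset σ) :
    ∏ i ∈ F, (X i : MvPowerSeries σ R) ^ k = monomial (indicatorExp k F) 1 := by
  simp [X_pow_eq, prod_monomial, indicatorExp]

theorem prod_X_eq_monomial {R : Type*} [CommSemiring R] (F : Finset σ) :
    ∏ i ∈ F, (X i : MvPowerSeries σ R) = monomial (indicatorExp 1 F) 1 := by
  simpa using prod_X_pow_eq_monomial (R := R) 1 F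

theorem mem_span_prod_X_pow_iff {R : Type*} [CommSemiring R] [Finite σ] {k : ℕ}
    {𝓕 : Set (Finset σ)} {f : MvPowerSeries σ R} :
    f ∈ Ideal.span ((fun F => ∏ i ∈ F, (X i : MvPowerSeries σ R) ^ k) '' 𝓕) ↔
      ∀ e, coeff e f ≠ 0 → ∃ F ∈ 𝓕, indicatorExp k F ≤ e := by
  simp_rw [prod_X_pow_eq_monomial]
  rw [← Set.image_image (monomial · 1) (indicatorExp k),
    mem_span_monomial_one_iff ((Set.toFinite 𝓕).image _)]
  simp only [Set.exists_mem_image]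

theorem indicatorExp_le_iff {k : ℕ} {F : Finset σ} {d : σ →₀ ℕ} :
    indicatorExp k F ≤ d ↔ ∀ i ∈ F, k ≤ d i := by
  classical
  simp only [Finsupp.le_def, indicatorExp_apply]
  refine ⟨fun h i hi => by simpa [hi] using h i, fun h i => ?_⟩
  split_ifs with hi
  exacts [h i hi, Nat.zero_le _]

def geTwo (e : σ →₀ ℕ) : Finset σ := {i ∈ e.support | 2 ≤ e i}

def eqOne (e : σ →₀ ℕ) : Finset σ := {i ∈ e.support | e i = 1}

@[simp]
theorem mem_geTwo {e : σ →₀ ℕ} {i : σ} : i ∈ geTwo e ↔ 2 ≤ e i := by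
  simp only [geTwo, mem_filter, Finsupp.mem_support_iff, and_iff_right_iff_imp]
  omega

@[simp]
theorem mem_eqOne {e : σ →₀ ℕ} {i : σ} : i ∈ eqOne e ↔ e i = 1 := by
  simp only [eqOne, mem_filter, Finsupp.mem_support_iff, and_iff_right_iff_imp]
  omega

theorem indicatorExp_two_le_iff {G : Finset σ} {e : σ →₀ ℕ} :
    indicatorExp 2 G ≤ e ↔ G ⊆ geTwo e := by
  simp [indicatorExp_le_iff, subset_iff]

theorem geTwo_add_indicatorExp_one [DecidableEq σ] (e : σ →₀ ℕ) (F : Finset σ) :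
    geTwo (e + indicatorExp 1 F) = geTwo e ∪ (eqOne e ∩ F) := by
  ext i
  simp only [mem_geTwo, Finsupp.add_apply, indicatorExp_apply, mem_union, mem_inter, mem_eqOne]
  split_ifs with hi <;> simp [hi]; omega

theorem indicatorExp_one_univ_le_iff [Fintype σ] [DecidableEq σ] {e : σ →₀ ℕ} :
    indicatorExp 1 (univ : Finset σ) ≤ e ↔ geTwo e ∪ eqOne e = univ := by
  simp only [indicatorExp_le_iff, eq_univ_iff_forall, mem_univ, true_imp_iff, mem_union,
    mem_geTwo, mem_eqOne]
  refine forall_congr' fun i => ?_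
  omega

theorem forall_geTwo_eqOne_iff [DecidableEq σ] {Φ : Finset σ → Finset σ → Prop} :
    (∀ e : σ →₀ ℕ, Φ (geTwo e) (eqOne e)) ↔ ∀ A B, Disjoint A B → Φ A B := by
  refine ⟨fun h A B hAB => ?_, fun h e => h _ _ ?_⟩
  · set e := indicatorExp 2 A + indicatorExp 1 B
    have hAB' : ∀ i ∈ A, i ∉ B := fun _ hi => disjoint_left.1 hAB hi
    have he (i) : e i = if i ∈ A then 2 else if i ∈ B then 1 else 0 := by
      by_cases hiA : i ∈ A <;> simp_all [e, indicatorExp_apply]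
    have hA : geTwo e = A := by ext i; simp only [mem_geTwo, he]; split_ifs <;> simp_all
    have hB : eqOne e = B := by ext i; simp only [mem_eqOne, he]; split_ifs <;> simp_all
    exact hA ▸ hB ▸ h e
  · exact disjoint_left.2 fun i h₂ h₁ => by simp at h₁ h₂; omega

end Exponents

section SimplicialComplex

variable {n : ℕ} {Δ : Set (Finset (Fin n))}

theorem IsSimplicialComplex.exists_notMem_subset_iff (hΔ : IsSimplicialComplex Δ)
    {X : Finset (Fin n)} : (∃ G ∉ Δ, G ⊆ X) ↔ X ∉ Δ :=
  ⟨fun ⟨G, hG, hGX⟩ hX => hG (hΔ.2 X hX G hGX), fun hX => ⟨X, hX, subset_rfl⟩⟩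

theorem exists_isFacet_superset {F : Finset (Fin n)} (hF : F ∈ Δ) :
    ∃ G, IsFacet Δ G ∧ F ⊆ G := by
  obtain ⟨G, hFG, hG⟩ := (Set.toFinite Δ).exists_le_maximal hF
  exact ⟨G, ⟨hG.prop, fun H hH hGH => (hG.eq_of_le hH hGH).symm⟩, hFG⟩

theorem isFreeFace_erase (hΔ : IsSimplicialComplex Δ) {P Q : Finset (Fin n)} (hP : P ∈ Δ)
    (hQP : Q ⊆ P) (hmax : ∀ G ∈ Δ, Q ⊆ G → G ⊆ P) {j : Fin n} (hjP : j ∈ P) (hjQ : j ∉ Q) :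
    IsFreeFace Δ (P.erase j) := by
  have hQ : Q ⊆ P.erase j := fun x hx => mem_erase.2 ⟨by rintro rfl; exact hjQ hx, hQP hx⟩
  refine ⟨hΔ.2 P hP _ (erase_subset j P), j, notMem_erase j P, ?_, fun G hG hG' => ?_⟩ <;>
    rw [insert_erase hjP]
  · exact ⟨hP, fun H hH hPH => (hmax H hH (hQP.trans hPH)).antisymm hPH⟩
  · exact (hG.2 P hP (hmax G hG.1 (hQ.trans hG'))).symm

theorem IsFreeFace.exists_compl (hΔ : IsSimplicialComplex Δ) {F : Finset (Fin n)}
    (hF : IsFreeFace Δ F) :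
    ∃ B, Disjoint F B ∧ F ∪ B ≠ univ ∧ ∀ F' ∉ Δ, F ∪ (B ∩ F') ∉ Δ := by
  obtain ⟨-, i, hiF, hfacet, huniq⟩ := hF
  refine ⟨(insert i F)ᶜ, disjoint_compl_right.mono_left (subset_insert i F), fun h => ?_,
    fun F' hF' hmem => hF' (hΔ.2 _ hfacet.1 F' fun x hx => ?_)⟩
  · have hi : i ∈ F ∪ (insert i F)ᶜ := h ▸ mem_univ i
    simp [hiF] at hi
  · obtain ⟨G, hG, hsub⟩ := exists_isFacet_superset hmem
    have hG' : G = insert i F := huniq G hG (subset_union_left.trans hsub)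
    by_contra hxi
    exact hxi (hG' ▸ hsub (mem_union_right _ (mem_inter.2 ⟨mem_compl.2 hxi, hx⟩)))

theorem exists_isFreeFace_of_union_inter_notMem (hΔ : IsSimplicialComplex Δ)
    {A B : Finset (Fin n)} (hAB : Disjoint A B) (hA : A ∈ Δ) (hAB_univ : A ∪ B ≠ univ)
    (hcolon : ∀ F ∉ Δ, A ∪ (B ∩ F) ∉ Δ) : ∃ F, IsFreeFace Δ F := by
  obtain ⟨j, hj⟩ : ∃ j, j ∉ A ∪ B := by simpa [eq_univ_iff_forall] using hAB_univ
  obtain ⟨S, -, hS⟩ := (Set.toFinite {S | S ⊆ B ∧ A ∪ S ∈ Δ}).exists_le_maximal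
    (a := ∅) ⟨empty_subset B, by simpa using hA⟩
  obtain ⟨hSB, hAS⟩ := hS.prop
  have hBS : Bᶜ ∪ S ∈ Δ := by
    by_contra h
    apply hcolon _ h
    rwa [inter_union_distrib_left, inter_compl, empty_union, inter_eq_right.2 hSB]
  refine ⟨_, isFreeFace_erase hΔ hBS (Q := A ∪ S)
    (union_subset_union (subset_compl_iff_disjoint_right.2 hAB) subset_rfl)
    (fun G hG hASG x hx => ?_) (j := j) ?_ ?_⟩
  · by_cases hxB : x ∈ B
    · have hSG : S = G ∩ B := hS.eq_of_le ⟨inter_subset_right,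
          hΔ.2 G hG _ (union_subset (subset_union_left.trans hASG) inter_subset_left)⟩
        (subset_inter (subset_union_right.trans hASG) hSB)
      exact mem_union_right _ (hSG ▸ mem_inter.2 ⟨hx, hxB⟩)
    · exact mem_union_left _ (mem_compl.2 hxB)
  · exact mem_union_left _ (mem_compl.2 fun h => hj (mem_union_right _ h))
  · exact fun h => hj ((mem_union.1 h).elim (mem_union_left _) (mem_union_right _ <| hSB ·))

end SimplicialComplex

section StanleyReisner

variable {K : Type*} [Field K] {n : ℕ} {Δ : Set (Finset (Fin n))}

theorem mem_SRIdeal2_iff (hΔ : IsSimplicialComplex Δ) {f : MvPowerSeries (Fin n) K} :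
    f ∈ SRIdeal2 K Δ ↔ ∀ e, coeff e f ≠ 0 → geTwo e ∉ Δ := by
  simp only [SRIdeal2, mem_span_prod_X_pow_iff, Set.mem_ofPred_eq, indicatorExp_two_le_iff,
    hΔ.exists_notMem_subset_iff]

theorem mem_colon_SRIdeal_iff (hΔ : IsSimplicialComplex Δ) {f : MvPowerSeries (Fin n) K} :
    f ∈ (SRIdeal2 K Δ).colon (SRIdeal K Δ) ↔
      ∀ e, coeff e f ≠ 0 → ∀ F ∉ Δ, geTwo e ∪ (eqOne e ∩ F) ∉ Δ := by
  simp only [SRIdeal, Ideal.colon_span, Submodule.mem_colon, Set.forall_mem_image,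
    Set.mem_ofPred_eq, smul_eq_mul, prod_X_eq_monomial, mem_SRIdeal2_iff hΔ,
    MvPowerSeries.forall_coeff_mul_monomial_ne_zero_imp, geTwo_add_indicatorExp_one]
  exact ⟨fun h e he F hF => h hF e he, fun h F hF e he => h e he F hF⟩

theorem mem_SRIdeal2_sup_span_prod_X_iff (hΔ : IsSimplicialComplex Δ)
    {f : MvPowerSeries (Fin n) K} :
    f ∈ SRIdeal2 K Δ ⊔ Ideal.span {∏ i, (X i : MvPowerSeries (Fin n) K)} ↔
      ∀ e, coeff e f ≠ 0 → geTwo e ∉ Δ ∨ geTwo e ∪ eqOne e = univ := by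
  have hspan : SRIdeal2 K Δ ⊔ Ideal.span {∏ i, (X i : MvPowerSeries (Fin n) K)} =
      Ideal.span ((monomial · 1) ''
        insert (indicatorExp 1 (univ : Finset (Fin n))) (indicatorExp 2 '' {F | F ∉ Δ})) := by
    rw [Set.image_insert_eq, Ideal.span_insert, sup_comm, Set.image_image, SRIdeal2]
    simp_rw [prod_X_pow_eq_monomial, prod_X_eq_monomial]
  rw [hspan, MvPowerSeries.mem_span_monomial_one_iff (((Set.toFinite _).image _).insert _)]
  simp only [Set.exists_mem_insert, Set.exists_mem_image, Set.mem_ofPred_eq,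
    indicatorExp_two_le_iff, hΔ.exists_notMem_subset_iff, indicatorExp_one_univ_le_iff, or_comm]

theorem SRIdeal2_sup_span_prod_X_le_colon (hΔ : IsSimplicialComplex Δ) :
    SRIdeal2 K Δ ⊔ Ideal.span {∏ i, (X i : MvPowerSeries (Fin n) K)} ≤
      (SRIdeal2 K Δ).colon (SRIdeal K Δ) := by
  rw [MvPowerSeries.ideal_le_iff_of_forall_coeff (fun _ => mem_SRIdeal2_sup_span_prod_X_iff hΔ)
    (fun _ => mem_colon_SRIdeal_iff hΔ)]
  rintro e (he | he) F hF hmem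
  · exact he (hΔ.2 _ hmem _ subset_union_left)
  · exact hF (hΔ.2 _ hmem _ fun x hx => by
      simpa [hx] using (he ▸ mem_univ x : x ∈ geTwo e ∪ eqOne e))

theorem colon_SRIdeal_eq_iff (hΔ : IsSimplicialComplex Δ) :
    (SRIdeal2 K Δ).colon (SRIdeal K Δ) =
        SRIdeal2 K Δ ⊔ Ideal.span {∏ i, (X i : MvPowerSeries (Fin n) K)} ↔
      ∀ A B : Finset (Fin n), Disjoint A B → (∀ F ∉ Δ, A ∪ (B ∩ F) ∉ Δ) →
        A ∉ Δ ∨ A ∪ B = univ := by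
  rw [le_antisymm_iff, and_iff_left (SRIdeal2_sup_span_prod_X_le_colon hΔ),
    MvPowerSeries.ideal_le_iff_of_forall_coeff (fun _ => mem_colon_SRIdeal_iff hΔ)
      (fun _ => mem_SRIdeal2_sup_span_prod_X_iff hΔ)]
  exact forall_geTwo_eqOne_iff
    (Φ := fun A B => (∀ F ∉ Δ, A ∪ (B ∩ F) ∉ Δ) → A ∉ Δ ∨ A ∪ B = univ)

end StanleyReisner

theorem stmt_0_general (K : Type*) [Field K] {n : ℕ} (Δ : Set (Finset (Fin n)))
    (hΔ : IsSimplicialComplex Δ) :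
    Submodule.colon (SRIdeal2 K Δ) (SRIdeal K Δ) =
      SRIdeal2 K Δ ⊔ Ideal.span {∏ i : Fin n, (X i : MvPowerSeries (Fin n) K)} ↔
    ¬ ∃ F, IsFreeFace Δ F := by
  rw [colon_SRIdeal_eq_iff hΔ]
  constructor
  · rintro h ⟨F, hF⟩
    obtain ⟨B, hFB, hFB_univ, hcolon⟩ := hF.exists_compl hΔ
    exact (h F B hFB hcolon).elim (· hF.1) hFB_univ
  · intro h A B hAB hcolon
    by_contra! hA
    exact h (exists_isFreeFace_of_union_inter_notMem hΔ hAB hA.1 hA.2 hcolon)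

/-- For Δ not a cone over any vertex, `I_Δ^[2] : I_Δ = I_Δ^[2] + (x_1 ⋯ x_n)`
iff Δ has no free face. -/
theorem stmt_0 (K : Type*) [Field K] {n : ℕ} (Δ : Set (Finset (Fin n)))
    (hΔ : IsSimplicialComplex Δ)
    (hcone : ∀ i : Fin n, ¬ ∀ F ∈ Δ, insert i F ∈ Δ) :
    Submodule.colon (SRIdeal2 K Δ) (SRIdeal K Δ) =
      SRIdeal2 K Δ ⊔ Ideal.span {∏ i : Fin n, (X i : MvPowerSeries (Fin n) K)} ↔
    ¬ ∃ F, IsFreeFace Δ F :=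
  stmt_0_general K Δ hΔ
end

section
/- For every simplicial complex Δ on [n], the inclusion I_Δ^[2] + (x_1 x_2 ⋯ x_n) ⊆ I_Δ^[2] : I_Δ holds. -/
open MvPowerSeries Finset

theorem Finset.prod_mul_prod_eq_prod_sq_mul_prod_compl {ι M : Type*} [Fintype ι] [DecidableEq ι]
    [CommMonoid M] (f : ι → M) (s : Finset ι) :
    (∏ i, f i) * ∏ i ∈ s, f i = (∏ i ∈ s, f i ^ 2) * ∏ i ∈ sᶜ, f i := by
  rw [← prod_mul_prod_compl s f, prod_pow, sq]
  exact mul_right_comm _ _ _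

-- Each generator `x_F` of `I_Δ` satisfies `(x_1 ⋯ x_n) x_F = x_F² · x_{[n] ∖ F}`.
theorem prod_X_mem_SRIdeal2_colon_SRIdeal (K : Type*) [Field K] {n : ℕ}
    (Δ : Set (Finset (Fin n))) :
    ∏ i : Fin n, (X i : MvPowerSeries (Fin n) K) ∈
      Submodule.colon (SRIdeal2 K Δ) (SRIdeal K Δ) := by
  rw [SRIdeal, Ideal.colon_span, Submodule.mem_colon]
  rintro _ ⟨F, hF, rfl⟩
  rw [smul_eq_mul, prod_mul_prod_eq_prod_sq_mul_prod_compl]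
  exact Ideal.mul_mem_right _ _ (Ideal.subset_span ⟨F, hF, rfl⟩)

theorem stmt_3_general (K : Type*) [Field K] {n : ℕ} (Δ : Set (Finset (Fin n))) :
    SRIdeal2 K Δ ⊔ Ideal.span {∏ i : Fin n, (X i : MvPowerSeries (Fin n) K)} ≤
      Submodule.colon (SRIdeal2 K Δ) (SRIdeal K Δ) :=
  sup_le Ideal.le_colon
    ((Ideal.span_singleton_le_iff_mem _).2 (prod_X_mem_SRIdeal2_colon_SRIdeal K Δ))

/-- For every simplicial complex Δ,
`I_Δ^[2] + (x_1 ⋯ x_n) ⊆ I_Δ^[2] : I_Δ`. -/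
theorem stmt_3 (K : Type*) [Field K] {n : ℕ} (Δ : Set (Finset (Fin n)))
    (hΔ : IsSimplicialComplex Δ) :
    SRIdeal2 K Δ ⊔ Ideal.span {∏ i : Fin n, (X i : MvPowerSeries (Fin n) K)} ≤
      Submodule.colon (SRIdeal2 K Δ) (SRIdeal K Δ) :=
  stmt_3_general K Δ
end

section
/- Let V ⊆ [n], let Δ' be a simplicial complex on V, and let Δ = Δ' * 2^{[n]∖V} be the simplicial complex on [n] given by F ∈ Δ ⇔ F ∩ V ∈ Δ'. Let S = K[[x_1, …, x_n]] and S' = K[[x_i | i ∈ V]]. Then the equality of ideals I_Δ^[2] : I_Δ = I_Δ^[2] + (∏_{i∈V} x_i) holds in S if and only if the equality I_{Δ'}^[2] : I_{Δ'} = I_{Δ'}^[2] + (∏_{i∈V} x_i) holds in S'. -/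
open MvPowerSeries Finset

/-- The Stanley–Reisner ideal of a complex `Δ'` on a vertex subset `V ⊆ [n]`,
inside `S' = K[[x_i ∣ i ∈ V]]`. -/
noncomputable def SRIdealOn (K : Type*) [Field K] {n : ℕ} (V : Finset (Fin n))
    (Δ' : Set (Finset (Fin n))) : Ideal (MvPowerSeries {i : Fin n // i ∈ V} K) :=
  Ideal.span ((fun F : Finset {i : Fin n // i ∈ V} =>
      ∏ i ∈ F, (X i : MvPowerSeries {i : Fin n // i ∈ V} K)) ''
    {F | F.map (Function.Embedding.subtype fun i => i ∈ V) ∉ Δ'})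

/-- The second Frobenius power of the Stanley–Reisner ideal of `Δ'` inside
`S' = K[[x_i ∣ i ∈ V]]`. -/
noncomputable def SRIdeal2On (K : Type*) [Field K] {n : ℕ} (V : Finset (Fin n))
    (Δ' : Set (Finset (Fin n))) : Ideal (MvPowerSeries {i : Fin n // i ∈ V} K) :=
  Ideal.span ((fun F : Finset {i : Fin n // i ∈ V} =>
      ∏ i ∈ F, (X i : MvPowerSeries {i : Fin n // i ∈ V} K) ^ 2) ''
    {F | F.map (Function.Embedding.subtype fun i => i ∈ V) ∉ Δ'})

/-!
All ideals involved are monomial ideals of a power series ring, so (testing with monomials)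
each side of the equivalence is an equality of sets of exponents: those of `I^[2] : I` against
those of `I^[2] + (x_V)`. The nonfaces of `Δ = Δ' * 2^{[n]∖V}` are exactly the sets whose trace
on `V` is a nonface of `Δ'`; hence these exponent sets for `Δ` are the preimages of the
corresponding sets for `Δ'` under the surjective restriction of exponents to `V`.
-/

namespace MvPowerSeries

variable {σ R : Type*} [CommSemiring R]

variable (R) in
noncomputable def monomialIdeal (M : Set (σ →₀ ℕ)) : Ideal (MvPowerSeries σ R) :=
  Ideal.span ((fun d => monomial d 1) '' M)

theorem exists_le_of_mem_monomialIdeal {M : Set (σ →₀ ℕ)} {f : MvPowerSeries σ R}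
    (hf : f ∈ monomialIdeal R M) {e : σ →₀ ℕ} (he : coeff e f ≠ 0) : ∃ d ∈ M, d ≤ e := by
  classical
  induction hf using Submodule.span_induction generalizing e with
  | mem x hx =>
    obtain ⟨d, hd, rfl⟩ := hx
    rw [coeff_monomial] at he
    split_ifs at he with hed
    · exact ⟨d, hd, hed.ge⟩
    · exact absurd rfl he
  | zero => simp at he
  | add x y _ _ hx hy =>
    rw [map_add] at he
    by_cases hxe : coeff e x = 0
    · exact hy (by simpa [hxe] using he)
    · exact hx hxe
  | smul a x _ hx =>
    rw [smul_eq_mul, coeff_mul] at he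
    obtain ⟨p, hp, hne⟩ := exists_ne_zero_of_sum_ne_zero he
    obtain ⟨d, hd, hdp⟩ := hx (right_ne_zero_of_mul hne)
    rw [HasAntidiagonal.mem_antidiagonal] at hp
    exact ⟨d, hd, hdp.trans (hp ▸ le_add_self)⟩

theorem mem_monomialIdeal_of_forall_coeff_ne_zero {M : Set (σ →₀ ℕ)} (hM : M.Finite)
    {f : MvPowerSeries σ R} (h : ∀ e, coeff e f ≠ 0 → ∃ d ∈ M, d ≤ e) :
    f ∈ monomialIdeal R M := by
  classical
  choose! sel hselM hsel using h
  -- `f = ∑ d, g d * x^d`, where the monomial `x^e` of `f` goes to the summand `d = sel e`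
  let g : (σ →₀ ℕ) → MvPowerSeries σ R := fun d u =>
    if sel (u + d) = d then coeff (u + d) f else 0
  have hg : ∀ d e, coeff e (g d * monomial d 1) = if sel e = d then coeff e f else 0 := by
    intro d e
    rw [coeff_mul_monomial, mul_one]
    by_cases hde : d ≤ e
    · rw [if_pos hde]
      show (if sel (e - d + d) = d then coeff (e - d + d) f else 0) = _
      rw [tsub_add_cancel_of_le hde]
    · rw [if_neg hde, eq_comm, ite_eq_right_iff]
      rintro rfl
      by_contra hne
      exact hde (hsel e hne)
  have hf : f = ∑ d ∈ hM.toFinset, g d * monomial d 1 := by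
    ext e
    simp only [map_sum, hg, Finset.sum_ite_eq, Set.Finite.mem_toFinset]
    split_ifs with he
    · rfl
    · by_contra hne
      exact he (hselM e hne)
  rw [hf]
  exact Ideal.sum_mem _ fun d hd =>
    Ideal.mul_mem_left _ _ (Ideal.subset_span ⟨d, hM.mem_toFinset.1 hd, rfl⟩)

theorem mem_monomialIdeal_iff {M : Set (σ →₀ ℕ)} (hM : M.Finite) {f : MvPowerSeries σ R} :
    f ∈ monomialIdeal R M ↔ ∀ e, coeff e f ≠ 0 → ∃ d ∈ M, d ≤ e :=
  ⟨fun hf _ => exists_le_of_mem_monomialIdeal hf, mem_monomialIdeal_of_forall_coeff_ne_zero hM⟩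

theorem monomialIdeal_union (M M' : Set (σ →₀ ℕ)) :
    monomialIdeal R (M ∪ M') = monomialIdeal R M ⊔ monomialIdeal R M' := by
  rw [monomialIdeal, Set.image_union, Ideal.span_union]
  rfl

theorem forall_coeff_mul_monomial_ne_zero_iff {f : MvPowerSeries σ R} {p : σ →₀ ℕ}
    {P : (σ →₀ ℕ) → Prop} :
    (∀ e, coeff e (f * monomial p 1) ≠ 0 → P e) ↔ ∀ e, coeff e f ≠ 0 → P (e + p) := by
  refine ⟨fun h e he => h _ (by rwa [coeff_add_mul_monomial, mul_one]), fun h e he => ?_⟩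
  rw [coeff_mul_monomial] at he
  split_ifs at he with hpe
  · rw [mul_one] at he
    simpa only [tsub_add_cancel_of_le hpe] using h _ he
  · exact absurd rfl he

theorem mem_colon_monomialIdeal_iff {M : Set (σ →₀ ℕ)} (hM : M.Finite) (P : Set (σ →₀ ℕ))
    {f : MvPowerSeries σ R} :
    f ∈ (monomialIdeal R M).colon (monomialIdeal R P) ↔
      ∀ e, coeff e f ≠ 0 → ∀ p ∈ P, ∃ d ∈ M, d ≤ e + p := by
  rw [show monomialIdeal R P = Ideal.span _ from rfl, Ideal.colon_span, Submodule.mem_colon,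
    Set.forall_mem_image]
  simp only [smul_eq_mul, mem_monomialIdeal_iff hM, forall_coeff_mul_monomial_ne_zero_iff]
  exact ⟨fun h e he p hp => h hp e he, fun h p hp e he => h e he p hp⟩

theorem forall_coeff_monomial_ne_zero_iff [Nontrivial R] {A : Set (σ →₀ ℕ)} {e : σ →₀ ℕ} :
    (∀ e', coeff e' (monomial e (1 : R)) ≠ 0 → e' ∈ A) ↔ e ∈ A := by
  classical
  simp [coeff_monomial]

theorem ideal_eq_iff_of_mem_iff [Nontrivial R] {I J : Ideal (MvPowerSeries σ R)}
    {A B : Set (σ →₀ ℕ)} (hI : ∀ f, f ∈ I ↔ ∀ e, coeff e f ≠ 0 → e ∈ A)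
    (hJ : ∀ f, f ∈ J ↔ ∀ e, coeff e f ≠ 0 → e ∈ B) : I = J ↔ A = B := by
  constructor
  · rintro rfl
    ext e
    rw [← forall_coeff_monomial_ne_zero_iff (R := R), ← forall_coeff_monomial_ne_zero_iff (R := R),
      ← hI, ← hJ]
  · rintro rfl
    ext f
    rw [hI, hJ]

end MvPowerSeries

noncomputable def charVec {σ : Type*} (F : Finset σ) : σ →₀ ℕ :=
  ∑ i ∈ F, Finsupp.single i 1

section CharVec

variable {σ : Type*}

theorem charVec_apply [DecidableEq σ] (F : Finset σ) (i : σ) :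
    charVec F i = if i ∈ F then 1 else 0 := by
  simp [charVec, Finsupp.finsetSum_apply, Finsupp.single_apply]

theorem nsmul_charVec_le_iff (k : ℕ) (G : Finset σ) (e : σ →₀ ℕ) :
    k • charVec G ≤ e ↔ ∀ i ∈ G, k ≤ e i := by
  classical
  simp only [Finsupp.le_def, Finsupp.smul_apply, charVec_apply, smul_eq_mul, mul_ite, mul_one,
    mul_zero]
  refine ⟨fun h i hi => by simpa [hi] using h i, fun h i => ?_⟩
  split_ifs with hi
  · exact h i hi
  · exact Nat.zero_le _

theorem MvPowerSeries.prod_X_eq_monomial_charVec {R : Type*} [CommSemiring R] (F : Finset σ) :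
    ∏ i ∈ F, (X i : MvPowerSeries σ R) = monomial (charVec F) 1 := by
  simp only [X_def, prod_monomial, prod_const_one, charVec]

theorem MvPowerSeries.prod_X_sq_eq_monomial_charVec {R : Type*} [CommSemiring R]
    (F : Finset σ) : ∏ i ∈ F, (X i : MvPowerSeries σ R) ^ 2 = monomial (2 • charVec F) 1 := by
  rw [prod_pow, prod_X_eq_monomial_charVec, monomial_pow, one_pow]

end CharVec

section StanleyReisner

variable {σ : Type*}

-- For `N` the nonfaces of `Δ`, these are the exponents of the monomials in `I_Δ^[2]` and in
-- `I_Δ^[2] : I_Δ`.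
def sqExponents (N : Set (Finset σ)) : Set (σ →₀ ℕ) :=
  {e | ∃ G ∈ N, 2 • charVec G ≤ e}

def colonExponents (N : Set (Finset σ)) : Set (σ →₀ ℕ) :=
  {e | ∀ F ∈ N, e + charVec F ∈ sqExponents N}

namespace MvPowerSeries

variable {R : Type*} [CommSemiring R]

theorem span_prod_X_image (N : Set (Finset σ)) :
    Ideal.span ((fun F => ∏ i ∈ F, (X i : MvPowerSeries σ R)) '' N) =
      monomialIdeal R (charVec '' N) := by
  simp only [monomialIdeal, Set.image_image, prod_X_eq_monomial_charVec]

theorem span_prod_X_sq_image (N : Set (Finset σ)) :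
    Ideal.span ((fun F => ∏ i ∈ F, (X i : MvPowerSeries σ R) ^ 2) '' N) =
      monomialIdeal R ((2 • charVec ·) '' N) := by
  simp only [monomialIdeal, Set.image_image, prod_X_sq_eq_monomial_charVec]

theorem colon_span_prod_X_eq_sup_iff [Finite σ] [Nontrivial R] (N : Set (Finset σ))
    (W : Finset σ) :
    Submodule.colon (Ideal.span ((fun F => ∏ i ∈ F, (X i : MvPowerSeries σ R) ^ 2) '' N))
        (Ideal.span ((fun F => ∏ i ∈ F, (X i : MvPowerSeries σ R)) '' N)) =
      Ideal.span ((fun F => ∏ i ∈ F, (X i : MvPowerSeries σ R) ^ 2) '' N) ⊔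
        Ideal.span {∏ i ∈ W, (X i : MvPowerSeries σ R)} ↔
    colonExponents N = sqExponents N ∪ {e | charVec W ≤ e} := by
  rw [← Set.image_singleton (f := fun F => ∏ i ∈ F, (X i : MvPowerSeries σ R)),
    span_prod_X_image, span_prod_X_image, span_prod_X_sq_image, ← monomialIdeal_union]
  refine ideal_eq_iff_of_mem_iff (fun f => ?_) (fun f => ?_)
  · rw [mem_colon_monomialIdeal_iff (Set.toFinite _)]
    simp only [Set.forall_mem_image, Set.exists_mem_image]
    rfl
  · rw [mem_monomialIdeal_iff (Set.toFinite _)]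
    simp only [Set.mem_union, or_and_right, exists_or, Set.exists_mem_image, Set.mem_singleton_iff,
      exists_eq_left]
    rfl

end MvPowerSeries

end StanleyReisner

section Restriction

variable {σ : Type*} {V : Finset σ}

theorem nsmul_charVec_map_subtype_le_iff (k : ℕ) (G : Finset {i // i ∈ V}) (e : σ →₀ ℕ) :
    k • charVec (G.map (Function.Embedding.subtype (· ∈ V))) ≤ e ↔
      k • charVec G ≤ e.subtypeDomain (· ∈ V) := by
  simp only [nsmul_charVec_le_iff, forall_mem_map]
  rfl

theorem charVec_le_iff_subtypeDomain (e : σ →₀ ℕ) :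
    charVec V ≤ e ↔ charVec (univ : Finset {i // i ∈ V}) ≤ e.subtypeDomain (· ∈ V) := by
  simpa [univ_eq_attach, attach_map_val] using nsmul_charVec_map_subtype_le_iff 1 univ e

variable [DecidableEq σ]

theorem subtypeDomain_charVec (F : Finset σ) :
    (charVec F).subtypeDomain (· ∈ V) = charVec (F.subtype (· ∈ V)) := by
  ext i
  simp [charVec_apply]

theorem subtype_map_subtype (G : Finset {i // i ∈ V}) :
    (G.map (Function.Embedding.subtype (· ∈ V))).subtype (· ∈ V) = G := by
  ext
  simp

variable {N : Set (Finset σ)} {N' : Set (Finset {i // i ∈ V})}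

theorem mem_sqExponents_iff_subtypeDomain (hN : ∀ F, F ∈ N ↔ F.subtype (· ∈ V) ∈ N')
    (e : σ →₀ ℕ) : e ∈ sqExponents N ↔ e.subtypeDomain (· ∈ V) ∈ sqExponents N' := by
  constructor
  · rintro ⟨G, hG, hle⟩
    refine ⟨G.subtype (· ∈ V), (hN G).1 hG, ?_⟩
    rw [nsmul_charVec_le_iff] at hle ⊢
    exact fun i hi => hle i (mem_subtype.1 hi)
  · rintro ⟨G', hG', hle⟩
    exact ⟨_, (hN _).2 (by rwa [subtype_map_subtype]),
      (nsmul_charVec_map_subtype_le_iff 2 G' e).2 hle⟩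

theorem mem_colonExponents_iff_subtypeDomain (hN : ∀ F, F ∈ N ↔ F.subtype (· ∈ V) ∈ N')
    (e : σ →₀ ℕ) : e ∈ colonExponents N ↔ e.subtypeDomain (· ∈ V) ∈ colonExponents N' := by
  have key : ∀ F, e + charVec F ∈ sqExponents N ↔
      e.subtypeDomain (· ∈ V) + charVec (F.subtype (· ∈ V)) ∈ sqExponents N' := fun F => by
    rw [mem_sqExponents_iff_subtypeDomain hN, Finsupp.subtypeDomain_add, subtypeDomain_charVec]
  refine ⟨fun h F' hF' => ?_, fun h F hF => (key F).2 (h _ ((hN F).1 hF))⟩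
  have hF : F'.map (Function.Embedding.subtype (· ∈ V)) ∈ N :=
    (hN _).2 (by rwa [subtype_map_subtype])
  simpa only [subtype_map_subtype] using (key _).1 (h _ hF)

theorem colonExponents_eq_iff_subtypeDomain (hN : ∀ F, F ∈ N ↔ F.subtype (· ∈ V) ∈ N') :
    colonExponents N = sqExponents N ∪ {e | charVec V ≤ e} ↔
      colonExponents N' = sqExponents N' ∪ {e | charVec (univ : Finset {i // i ∈ V}) ≤ e} := by
  have hsurj : Function.Surjective (Finsupp.subtypeDomain (M := ℕ) (· ∈ V)) :=
    fun e' => ⟨e'.extendDomain, Finsupp.subtypeDomain_extendDomain e'⟩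
  have hcolon : colonExponents N = Finsupp.subtypeDomain (· ∈ V) ⁻¹' colonExponents N' :=
    Set.ext (mem_colonExponents_iff_subtypeDomain hN)
  have hsq : sqExponents N ∪ {e | charVec V ≤ e} = Finsupp.subtypeDomain (· ∈ V) ⁻¹'
      (sqExponents N' ∪ {e | charVec (univ : Finset {i // i ∈ V}) ≤ e}) :=
    Set.ext fun e => or_congr (mem_sqExponents_iff_subtypeDomain hN e)
      (charVec_le_iff_subtypeDomain e)
  rw [hcolon, hsq]
  exact (Set.preimage_injective.2 hsurj).eq_iff

end Restriction

theorem stmt_10_general (K : Type*) [Field K] {n : ℕ} (V : Finset (Fin n))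
    (Δ' : Set (Finset (Fin n)))
    (Δ : Set (Finset (Fin n))) (hΔ : ∀ F : Finset (Fin n), F ∈ Δ ↔ F ∩ V ∈ Δ') :
    (Submodule.colon (SRIdeal2 K Δ) (SRIdeal K Δ) =
        SRIdeal2 K Δ ⊔ Ideal.span {∏ i ∈ V, (X i : MvPowerSeries (Fin n) K)}) ↔
    (Submodule.colon (SRIdeal2On K V Δ') (SRIdealOn K V Δ') =
        SRIdeal2On K V Δ' ⊔
          Ideal.span {∏ i : {i : Fin n // i ∈ V},
            (X i : MvPowerSeries {i : Fin n // i ∈ V} K)}) := by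
  have hN : ∀ F, F ∈ {F | F ∉ Δ} ↔
      F.subtype (· ∈ V) ∈ {F' | F'.map (Function.Embedding.subtype (· ∈ V)) ∉ Δ'} :=
    fun F => not_congr ((hΔ F).trans (by rw [subtype_map, filter_mem_eq_inter]))
  rw [SRIdeal, SRIdeal2, SRIdealOn, SRIdeal2On, colon_span_prod_X_eq_sup_iff,
    colon_span_prod_X_eq_sup_iff]
  exact colonExponents_eq_iff_subtypeDomain hN

/-- For `Δ = Δ' * 2^{[n]∖V}`, the equality
`I_Δ^[2] : I_Δ = I_Δ^[2] + (∏_{i∈V} x_i)` holds in `S = K[[x_1,…,x_n]]` iff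
`I_{Δ'}^[2] : I_{Δ'} = I_{Δ'}^[2] + (∏_{i∈V} x_i)` holds in `S' = K[[x_i ∣ i ∈ V]]`. -/
theorem stmt_10 (K : Type*) [Field K] {n : ℕ} (V : Finset (Fin n))
    (Δ' : Set (Finset (Fin n))) (hΔ' : IsSimplicialComplex Δ')
    (hΔ'V : ∀ F ∈ Δ', F ⊆ V)
    (Δ : Set (Finset (Fin n))) (hΔ : ∀ F : Finset (Fin n), F ∈ Δ ↔ F ∩ V ∈ Δ') :
    (Submodule.colon (SRIdeal2 K Δ) (SRIdeal K Δ) =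
        SRIdeal2 K Δ ⊔ Ideal.span {∏ i ∈ V, (X i : MvPowerSeries (Fin n) K)}) ↔
    (Submodule.colon (SRIdeal2On K V Δ') (SRIdealOn K V Δ') =
        SRIdeal2On K V Δ' ⊔
          Ideal.span {∏ i : {i : Fin n // i ∈ V},
            (X i : MvPowerSeries {i : Fin n // i ∈ V} K)}) :=
  stmt_10_general K V Δ' Δ hΔ
end
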